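/- Let G be a split graph with clique K = {k_1,…,k_p} and independent set I = {l_1,…,l_q}. Let G' be the graph whose vertex set consists of the vertices of G, a disjoint copy {m_1,…,m_p} ∪ {n_1,…,n_q} of them, and four new vertices k, l, m, n, and whose edges are: all edges of G joining K to I (the clique edges inside K are not included); an edge m_i n_j whenever k_i l_j is an edge of G; all edges between K_1 = {k, k_1,…,k_p} and K_2 = {m, m_1,…,m_p}; and the pendant edges l–k and n–m. Then G' is a bisplit graph with partition (I_1 ∪ I_2, K_1, K_2), where I_1 = {l, l_1,…,l_q} and I_2 = {n, n_1,…,n_q}: these three sets are independent in G' and K_1 ∪ K_2 induces a complete bipartite graph. -/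

import Mathlib

/-- `D` is a dominating set of `G`: every vertex outside `D` has a neighbour in `D`. -/
def Dominates {V : Type*} (G : SimpleGraph V) (D : Set V) : Prop :=
  ∀ u, u ∉ D → ∃ v ∈ D, G.Adj u v

/-- `S` is a secure dominating set of `G`. -/
def SecureDominates {V : Type*} (G : SimpleGraph V) (S : Set V) : Prop :=
  Dominates G S ∧
    ∀ u, u ∉ S → ∃ v ∈ S, G.Adj u v ∧ Dominates G ((S \ {v}) ∪ {u})

/-- The graph `G'` obtained from a split graph `G` with clique `K` and independent set `I`.
Vertices: the original vertices (`Sum.inl u`), a disjoint copy of them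
(`Sum.inr (Sum.inl u)`), and four new vertices `k = Sum.inr (Sum.inr 0)`,
`l = Sum.inr (Sum.inr 1)`, `m = Sum.inr (Sum.inr 2)`, `n = Sum.inr (Sum.inr 3)`.
Edges: all edges of `G` joining `K` to `I` (the clique edges inside `K` are not included);
an edge between the copies of `kᵢ ∈ K` and `lⱼ ∈ I` whenever `kᵢ lⱼ` is an edge of `G`;
all edges between `{k} ∪ K` and the copy `{m} ∪ K`-copy; and the pendant edges
`l - k` and `n - m`. -/
def splitBigExt {V : Type*} (G : SimpleGraph V) (K I : Set V) :
    SimpleGraph (V ⊕ V ⊕ Fin 4) :=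
  SimpleGraph.fromRel (fun a b =>
    (∃ u v, a = Sum.inl u ∧ b = Sum.inl v ∧ G.Adj u v ∧ u ∈ K ∧ v ∈ I) ∨
    (∃ u v, a = Sum.inr (Sum.inl u) ∧ b = Sum.inr (Sum.inl v) ∧ G.Adj u v ∧ u ∈ K ∧ v ∈ I) ∨
    (∃ u v, a = Sum.inl u ∧ u ∈ K ∧ b = Sum.inr (Sum.inl v) ∧ v ∈ K) ∨
    (∃ u, a = Sum.inl u ∧ u ∈ K ∧ b = Sum.inr (Sum.inr 2)) ∨
    (∃ v, a = Sum.inr (Sum.inr 0) ∧ b = Sum.inr (Sum.inl v) ∧ v ∈ K) ∨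
    (a = Sum.inr (Sum.inr 0) ∧ b = Sum.inr (Sum.inr 2)) ∨
    (a = Sum.inr (Sum.inr 1) ∧ b = Sum.inr (Sum.inr 0)) ∨
    (a = Sum.inr (Sum.inr 3) ∧ b = Sum.inr (Sum.inr 2)))

/-! Colour each vertex of `G'` by the part it is meant to lie in: `0` on `I₁ ∪ I₂`, `1` on `K₁`,
`2` on `K₂`. Since `G'` keeps only the `K`–`I` edges of `G` (and of its copy), while every other
edge runs between `K₁` and `K₂` or is a pendant edge at `k` or `m`, this is a proper colouring;
its colour classes are therefore independent, and they are the three parts once `I = Kᶜ`. -/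

lemma preimage_zero_union_preimage_one_union_preimage_two_eq_univ {α : Type*} (f : α → Fin 3) :
    f ⁻¹' {0} ∪ f ⁻¹' {1} ∪ f ⁻¹' {2} = Set.univ := by
  ext x
  have : ∀ c : Fin 3, c = 0 ∨ c = 1 ∨ c = 2 := by decide
  simpa [or_assoc] using this (f x)

namespace SplitBigExt

variable {V : Type*}

open Classical in
noncomputable def side (K : Set V) : V ⊕ V ⊕ Fin 4 → Fin 3
  | .inl u => if u ∈ K then 1 else 0
  | .inr (.inl u) => if u ∈ K then 2 else 0
  | .inr (.inr i) => ![1, 0, 2, 0] i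

lemma side_ne_of_adj {G : SimpleGraph V} {K I : Set V} (hdisj : Disjoint K I)
    {a b : V ⊕ V ⊕ Fin 4} (h : (splitBigExt G K I).Adj a b) : side K a ≠ side K b := by
  have hI : ∀ v ∈ I, v ∉ K := fun v hv hvK => Set.disjoint_left.mp hdisj hvK hv
  obtain ⟨-, h | h⟩ := h <;> [skip; rw [ne_comm]] <;>
  rcases h with ⟨u, v, rfl, rfl, -, hu, hv⟩ | ⟨u, v, rfl, rfl, -, hu, hv⟩ |
      ⟨u, v, rfl, hu, rfl, hv⟩ | ⟨u, rfl, hu, rfl⟩ | ⟨v, rfl, rfl, hv⟩ |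
      ⟨rfl, rfl⟩ | ⟨rfl, rfl⟩ | ⟨rfl, rfl⟩ <;>
    simp [side, *]

noncomputable def coloring (G : SimpleGraph V) {K I : Set V} (hdisj : Disjoint K I) :
    (splitBigExt G K I).Coloring (Fin 3) :=
  SimpleGraph.Coloring.mk (side K) (side_ne_of_adj hdisj)

lemma side_preimage_zero (K : Set V) :
    side K ⁻¹' {0} = (Sum.inl '' Kᶜ ∪ {Sum.inr (Sum.inr 1)} : Set (V ⊕ V ⊕ Fin 4)) ∪
        ((Sum.inr ∘ Sum.inl) '' Kᶜ ∪ {Sum.inr (Sum.inr 3)}) := by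
  ext (u | u | i) <;> try fin_cases i
  all_goals simp [side]

lemma side_preimage_one (K : Set V) :
    side K ⁻¹' {1} = (Sum.inl '' K ∪ {Sum.inr (Sum.inr 0)} : Set (V ⊕ V ⊕ Fin 4)) := by
  ext (u | u | i) <;> try fin_cases i
  all_goals simp [side, ite_eq_iff]

lemma side_preimage_two (K : Set V) :
    side K ⁻¹' {2} = ((Sum.inr ∘ Sum.inl) '' K ∪ {Sum.inr (Sum.inr 2)} : Set (V ⊕ V ⊕ Fin 4)) := by
  ext (u | u | i) <;> try fin_cases i
  all_goals simp [side, ite_eq_iff]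

lemma adj_of_side_eq_one_of_side_eq_two (G : SimpleGraph V) (K I : Set V)
    {a b : V ⊕ V ⊕ Fin 4} (ha : side K a = 1) (hb : side K b = 2) :
    (splitBigExt G K I).Adj a b := by
  replace ha : a ∈ side K ⁻¹' {1} := ha
  replace hb : b ∈ side K ⁻¹' {2} := hb
  rw [side_preimage_one] at ha
  rw [side_preimage_two] at hb
  rcases ha with ⟨u, hu, rfl⟩ | rfl <;> rcases hb with ⟨v, hv, rfl⟩ | rfl <;>
    simp [splitBigExt, *]

end SplitBigExt

theorem splitBigExt_isBisplit_general {V : Type*}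
    (G : SimpleGraph V) (K I : Set V)
    (hpart : K ∪ I = Set.univ) (hdisj : Disjoint K I) :
    -- with `K₁ = {k} ∪ K`, `K₂ = {m} ∪ K`-copy, `I₁ = {l} ∪ I`, `I₂ = {n} ∪ I`-copy:
    -- `G'` is a bisplit graph with partition `(I₁ ∪ I₂, K₁, K₂)`
    ((Sum.inl '' I ∪ {Sum.inr (Sum.inr 1)} : Set (V ⊕ V ⊕ Fin 4)) ∪
        ((Sum.inr ∘ Sum.inl) '' I ∪ {Sum.inr (Sum.inr 3)})) ∪
      (Sum.inl '' K ∪ {Sum.inr (Sum.inr 0)}) ∪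
      ((Sum.inr ∘ Sum.inl) '' K ∪ {Sum.inr (Sum.inr 2)}) = Set.univ ∧
    Disjoint ((Sum.inl '' I ∪ {Sum.inr (Sum.inr 1)} : Set (V ⊕ V ⊕ Fin 4)) ∪
        ((Sum.inr ∘ Sum.inl) '' I ∪ {Sum.inr (Sum.inr 3)}))
      (Sum.inl '' K ∪ {Sum.inr (Sum.inr 0)}) ∧
    Disjoint ((Sum.inl '' I ∪ {Sum.inr (Sum.inr 1)} : Set (V ⊕ V ⊕ Fin 4)) ∪
        ((Sum.inr ∘ Sum.inl) '' I ∪ {Sum.inr (Sum.inr 3)}))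
      ((Sum.inr ∘ Sum.inl) '' K ∪ {Sum.inr (Sum.inr 2)}) ∧
    Disjoint (Sum.inl '' K ∪ {Sum.inr (Sum.inr 0)} : Set (V ⊕ V ⊕ Fin 4))
      ((Sum.inr ∘ Sum.inl) '' K ∪ {Sum.inr (Sum.inr 2)}) ∧
    -- the three parts are independent sets in `G'`
    (∀ a ∈ ((Sum.inl '' I ∪ {Sum.inr (Sum.inr 1)} : Set (V ⊕ V ⊕ Fin 4)) ∪
        ((Sum.inr ∘ Sum.inl) '' I ∪ {Sum.inr (Sum.inr 3)})),
      ∀ b ∈ ((Sum.inl '' I ∪ {Sum.inr (Sum.inr 1)} : Set (V ⊕ V ⊕ Fin 4)) ∪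
        ((Sum.inr ∘ Sum.inl) '' I ∪ {Sum.inr (Sum.inr 3)})),
        ¬ (splitBigExt G K I).Adj a b) ∧
    (∀ a ∈ (Sum.inl '' K ∪ {Sum.inr (Sum.inr 0)} : Set (V ⊕ V ⊕ Fin 4)),
      ∀ b ∈ (Sum.inl '' K ∪ {Sum.inr (Sum.inr 0)} : Set (V ⊕ V ⊕ Fin 4)),
        ¬ (splitBigExt G K I).Adj a b) ∧
    (∀ a ∈ ((Sum.inr ∘ Sum.inl) '' K ∪ {Sum.inr (Sum.inr 2)} : Set (V ⊕ V ⊕ Fin 4)),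
      ∀ b ∈ ((Sum.inr ∘ Sum.inl) '' K ∪ {Sum.inr (Sum.inr 2)} : Set (V ⊕ V ⊕ Fin 4)),
        ¬ (splitBigExt G K I).Adj a b) ∧
    -- `K₁ ∪ K₂` induces a complete bipartite graph
    (∀ a ∈ (Sum.inl '' K ∪ {Sum.inr (Sum.inr 0)} : Set (V ⊕ V ⊕ Fin 4)),
      ∀ b ∈ ((Sum.inr ∘ Sum.inl) '' K ∪ {Sum.inr (Sum.inr 2)} : Set (V ⊕ V ⊕ Fin 4)),
        (splitBigExt G K I).Adj a b) := by
  obtain rfl : I = Kᶜ := (IsCompl.of_eq hdisj.eq_bot hpart).compl_eq.symm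
  let C := SplitBigExt.coloring G hdisj
  rw [← SplitBigExt.side_preimage_zero, ← SplitBigExt.side_preimage_one,
    ← SplitBigExt.side_preimage_two]
  have hne : ∀ c c' : Fin 3, c ≠ c' →
      Disjoint (SplitBigExt.side K ⁻¹' {c}) (SplitBigExt.side K ⁻¹' {c'}) :=
    fun _ _ h => (Set.disjoint_singleton.2 h).preimage _
  exact ⟨preimage_zero_union_preimage_one_union_preimage_two_eq_univ _,
    hne 0 1 (by decide), hne 0 2 (by decide), hne 1 2 (by decide),
    fun _ ha _ hb => C.not_adj_of_mem_colorClass ha hb,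
    fun _ ha _ hb => C.not_adj_of_mem_colorClass ha hb,
    fun _ ha _ hb => C.not_adj_of_mem_colorClass ha hb,
    fun _ ha _ hb => SplitBigExt.adj_of_side_eq_one_of_side_eq_two G K Kᶜ ha hb⟩

theorem splitBigExt_isBisplit {V : Type*} [Fintype V]
    (G : SimpleGraph V) (K I : Set V)
    (hpart : K ∪ I = Set.univ) (hdisj : Disjoint K I)
    (hK : G.IsClique K) (hI : ∀ a ∈ I, ∀ b ∈ I, ¬ G.Adj a b) :
    -- with `K₁ = {k} ∪ K`, `K₂ = {m} ∪ K`-copy, `I₁ = {l} ∪ I`, `I₂ = {n} ∪ I`-copy: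
    -- `G'` is a bisplit graph with partition `(I₁ ∪ I₂, K₁, K₂)`
    ((Sum.inl '' I ∪ {Sum.inr (Sum.inr 1)} : Set (V ⊕ V ⊕ Fin 4)) ∪
        ((Sum.inr ∘ Sum.inl) '' I ∪ {Sum.inr (Sum.inr 3)})) ∪
      (Sum.inl '' K ∪ {Sum.inr (Sum.inr 0)}) ∪
      ((Sum.inr ∘ Sum.inl) '' K ∪ {Sum.inr (Sum.inr 2)}) = Set.univ ∧
    Disjoint ((Sum.inl '' I ∪ {Sum.inr (Sum.inr 1)} : Set (V ⊕ V ⊕ Fin 4)) ∪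
        ((Sum.inr ∘ Sum.inl) '' I ∪ {Sum.inr (Sum.inr 3)}))
      (Sum.inl '' K ∪ {Sum.inr (Sum.inr 0)}) ∧
    Disjoint ((Sum.inl '' I ∪ {Sum.inr (Sum.inr 1)} : Set (V ⊕ V ⊕ Fin 4)) ∪
        ((Sum.inr ∘ Sum.inl) '' I ∪ {Sum.inr (Sum.inr 3)}))
      ((Sum.inr ∘ Sum.inl) '' K ∪ {Sum.inr (Sum.inr 2)}) ∧
    Disjoint (Sum.inl '' K ∪ {Sum.inr (Sum.inr 0)} : Set (V ⊕ V ⊕ Fin 4))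
      ((Sum.inr ∘ Sum.inl) '' K ∪ {Sum.inr (Sum.inr 2)}) ∧
    -- the three parts are independent sets in `G'`
    (∀ a ∈ ((Sum.inl '' I ∪ {Sum.inr (Sum.inr 1)} : Set (V ⊕ V ⊕ Fin 4)) ∪
        ((Sum.inr ∘ Sum.inl) '' I ∪ {Sum.inr (Sum.inr 3)})),
      ∀ b ∈ ((Sum.inl '' I ∪ {Sum.inr (Sum.inr 1)} : Set (V ⊕ V ⊕ Fin 4)) ∪
        ((Sum.inr ∘ Sum.inl) '' I ∪ {Sum.inr (Sum.inr 3)})),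
        ¬ (splitBigExt G K I).Adj a b) ∧
    (∀ a ∈ (Sum.inl '' K ∪ {Sum.inr (Sum.inr 0)} : Set (V ⊕ V ⊕ Fin 4)),
      ∀ b ∈ (Sum.inl '' K ∪ {Sum.inr (Sum.inr 0)} : Set (V ⊕ V ⊕ Fin 4)),
        ¬ (splitBigExt G K I).Adj a b) ∧
    (∀ a ∈ ((Sum.inr ∘ Sum.inl) '' K ∪ {Sum.inr (Sum.inr 2)} : Set (V ⊕ V ⊕ Fin 4)),
      ∀ b ∈ ((Sum.inr ∘ Sum.inl) '' K ∪ {Sum.inr (Sum.inr 2)} : Set (V ⊕ V ⊕ Fin 4)),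
        ¬ (splitBigExt G K I).Adj a b) ∧
    -- `K₁ ∪ K₂` induces a complete bipartite graph
    (∀ a ∈ (Sum.inl '' K ∪ {Sum.inr (Sum.inr 0)} : Set (V ⊕ V ⊕ Fin 4)),
      ∀ b ∈ ((Sum.inr ∘ Sum.inl) '' K ∪ {Sum.inr (Sum.inr 2)} : Set (V ⊕ V ⊕ Fin 4)),
        (splitBigExt G K I).Adj a b) :=
  splitBigExt_isBisplit_general G K I hpart hdisj
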